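/- Let n, c, d be positive integers and let a candidate d-c invariant I be given by nonzero coefficient vectors w j i ∈ ℝⁿ and constants b j i ∈ ℝ for j ∈ Fin d, i ∈ Fin c. Then for every point s ∈ ℝⁿ and every point t ∈ ℝⁿ that satisfies I, one has δ_approx(I, s) ≤ ‖s − t‖; consequently δ_approx(I, s) is a lower bound for (under-approximates) the Euclidean set distance from s to the set of points satisfying I. -/

import Mathlib

open RealInnerProductSpace

/-- The approximate polytope set distance `δ_approx(I, s)` of a point `s ∈ ℝⁿ` from the
candidate `d`-`c` invariant `I` given by coefficient vectors `w j i` and constants `b j i`: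
the minimum over cubes `j` of the average normalized positive-part violation of the
half-space constraints of the cube. -/
noncomputable def deltaApprox {n c d : ℕ} (w : Fin d → Fin c → EuclideanSpace ℝ (Fin n))
    (b : Fin d → Fin c → ℝ) (s : EuclideanSpace ℝ (Fin n)) : ℝ :=
  ⨅ j : Fin d, (1 / (c : ℝ)) * ∑ i : Fin c, max (⟪w j i, s⟫ - b j i) 0 / ‖w j i‖

/-- **`δ_approx` under-approximates the Euclidean set distance:** for any point `s` and any
point `t` satisfying the invariant `I`, `δ_approx(I, s) ≤ ‖s − t‖`; hence `δ_approx(I, s)` is a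
lower bound for the Euclidean set distance from `s` to the set of points satisfying `I`. -/
theorem deltaApprox_le_dist {n c d : ℕ} (hn : 0 < n) (hc : 0 < c) (hd : 0 < d)
    (w : Fin d → Fin c → EuclideanSpace ℝ (Fin n)) (b : Fin d → Fin c → ℝ)
    (hw : ∀ j i, w j i ≠ 0) (s t : EuclideanSpace ℝ (Fin n))
    (ht : ∃ j : Fin d, ∀ i : Fin c, ⟪w j i, t⟫ ≤ b j i) :
    deltaApprox w b s ≤ ‖s - t‖ := by
  obtain ⟨j, hj⟩ := ht
  have : Nonempty (Fin d) := ⟨j⟩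
  refine le_trans (ciInf_le (Finite.bddBelow_range _) j) ?_
  have hterm : ∀ i : Fin c, max (⟪w j i, s⟫ - b j i) 0 / ‖w j i‖ ≤ ‖s - t‖ := by
    intro i
    have hwpos : (0 : ℝ) < ‖w j i‖ := norm_pos_iff.mpr (hw j i)
    rw [div_le_iff₀ hwpos]
    refine max_le ?_ (by positivity)
    have h1 : ⟪w j i, s⟫ - b j i ≤ ⟪w j i, s - t⟫ := by
      rw [inner_sub_right]; linarith [hj i]
    calc ⟪w j i, s⟫ - b j i ≤ ⟪w j i, s - t⟫ := h1
      _ ≤ ‖w j i‖ * ‖s - t‖ := real_inner_le_norm _ _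
      _ = ‖s - t‖ * ‖w j i‖ := mul_comm _ _
  calc (1 / (c : ℝ)) * ∑ i : Fin c, max (⟪w j i, s⟫ - b j i) 0 / ‖w j i‖
      ≤ (1 / (c : ℝ)) * ∑ _i : Fin c, ‖s - t‖ := by
        apply mul_le_mul_of_nonneg_left (Finset.sum_le_sum fun i _ => hterm i)
        positivity
    _ = ‖s - t‖ := by
        rw [Finset.sum_const, Finset.card_univ, Fintype.card_fin]
        field_simp
        rw [nsmul_eq_mul]
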